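/- Robustness under clipping with an unclipped honest vector: let F be (f,κ)-robust, C ≥ 0, x_1,…,x_n ∈ ℝ^d, S ⊆ [n] with |S| = n−f, and S_c = {i ∈ S : ‖xᵢ‖ > C}. If |S∖S_c| ≥ 1, then ‖F(clip_C(x_1),…,clip_C(x_n)) − x̄_S‖² ≤ κ̃·(1/|S|)·Σ_{i∈S}‖xᵢ − x̄_S‖² with κ̃ = κ + |S_c|/|S∖S_c|. -/

import Mathlib

/-!
Write `yᵢ = clip_C(xᵢ)`, `m` and `ȳ` for the means of `x` and `y` over `S`, `A` and `U` for the
scatters `∑ ‖xᵢ - m‖²` and `∑ ‖yᵢ - ȳ‖²`, and `p = |S_c|`, `q = |S ∖ S_c|`, `s = p + q`.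
Since `‖ȳ‖ ≤ C` and `clip_C` is the nearest-point projection onto the ball of radius `C`,
`‖yᵢ - ȳ‖² + ‖xᵢ - yᵢ‖² ≤ ‖xᵢ - ȳ‖²`; summing over `S` gives `U + K ≤ A + s ‖m - ȳ‖²` with
`K = ∑ ‖xᵢ - yᵢ‖²`. On the other hand `s ‖m - ȳ‖ ≤ ∑ ‖xᵢ - yᵢ‖`, a sum of only `p` nonzero terms,
so `s² ‖m - ȳ‖² ≤ p K` by Cauchy–Schwarz. Hence `U ≤ A` and `s q ‖m - ȳ‖² ≤ p (A - U)`.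
Robustness on the clipped inputs gives `‖F(y) - ȳ‖² ≤ κ U / s`, and the inequality
`(a + b)² ≤ (α + β)(X + Y)` for `a² ≤ α X`, `b² ≤ β Y` merges the two bounds into
`‖F(y) - m‖² ≤ (κ + p / q) A / s`.
-/

open scoped Classical

noncomputable def clip {d : ℕ} (C : ℝ) (x : EuclideanSpace ℝ (Fin d)) :
    EuclideanSpace ℝ (Fin d) :=
  (min 1 (C / ‖x‖)) • x

/-- `(f, κ)`-robustness of an aggregation rule `F`. -/
def Robust {d : ℕ} (n f : ℕ) (κ : ℝ)
    (F : (Fin n → EuclideanSpace ℝ (Fin d)) → EuclideanSpace ℝ (Fin d)) : Prop :=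
  ∀ x : Fin n → EuclideanSpace ℝ (Fin d), ∀ S : Finset (Fin n), S.card = n - f →
    ‖F x - (S.card : ℝ)⁻¹ • ∑ i ∈ S, x i‖ ^ 2
      ≤ κ / (S.card : ℝ) * ∑ i ∈ S, ‖x i - (S.card : ℝ)⁻¹ • ∑ j ∈ S, x j‖ ^ 2

open Finset

noncomputable abbrev mean {ι E : Type*} [AddCommGroup E] [Module ℝ E] (S : Finset ι)
    (x : ι → E) : E :=
  (S.card : ℝ)⁻¹ • ∑ i ∈ S, x i

noncomputable abbrev scatter {ι E : Type*} [NormedAddCommGroup E] [InnerProductSpace ℝ E]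
    (S : Finset ι) (x : ι → E) : ℝ :=
  ∑ i ∈ S, ‖x i - mean S x‖ ^ 2

theorem sum_sub_mean_eq_zero {ι E : Type*} [AddCommGroup E] [Module ℝ E] (S : Finset ι)
    (x : ι → E) : ∑ i ∈ S, (x i - mean S x) = 0 := by
  rcases S.eq_empty_or_nonempty with rfl | hS
  · simp
  · rw [sum_sub_distrib, sum_const, ← Nat.cast_smul_eq_nsmul ℝ,
      smul_inv_smul₀ (by positivity), sub_self]

theorem sq_add_le_mul_add_mul {a b α β X Y : ℝ} (hβ : 0 ≤ β) (hX : 0 ≤ X) (hY : 0 ≤ Y)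
    (hαXY : 0 ≤ α * (X + Y)) (ha : a ^ 2 ≤ α * X) (hb : b ^ 2 ≤ β * Y) :
    (a + b) ^ 2 ≤ (α + β) * (X + Y) := by
  rcases le_or_gt 0 α with hα | hα
  · have hab : (2 * a * b) ^ 2 ≤ (α * Y + β * X) ^ 2 := by
      nlinarith [sq_nonneg (α * Y - β * X), mul_le_mul ha hb (sq_nonneg b) (by positivity)]
    have := (abs_le_of_sq_le_sq' hab (by positivity)).2
    nlinarith
  · obtain ⟨rfl, rfl⟩ : X = 0 ∧ Y = 0 := by constructor <;> nlinarith
    nlinarith [sq_nonneg (a - b)]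

section InnerProductSpace

variable {ι E : Type*} [NormedAddCommGroup E] [InnerProductSpace ℝ E]

theorem sum_norm_sub_sq_eq (S : Finset ι) (x : ι → E) (v : E) :
    ∑ i ∈ S, ‖x i - v‖ ^ 2 = scatter S x + S.card * ‖mean S x - v‖ ^ 2 := by
  have h i : ‖x i - v‖ ^ 2 = ‖x i - mean S x‖ ^ 2
      + 2 * inner ℝ (x i - mean S x) (mean S x - v) + ‖mean S x - v‖ ^ 2 := by
    rw [← norm_add_sq_real, sub_add_sub_cancel]
  rw [sum_congr rfl fun i _ => h i, sum_add_distrib, sum_add_distrib, ← mul_sum, ← sum_inner,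
    sum_sub_mean_eq_zero, inner_zero_left, sum_const, nsmul_eq_mul]
  ring

theorem card_mul_norm_mean_sub_mean_le (S : Finset ι) (x y : ι → E) :
    S.card * ‖mean S x - mean S y‖ ≤ ∑ i ∈ S, ‖x i - y i‖ := by
  rcases S.eq_empty_or_nonempty with rfl | hS
  · simp
  · rw [mean, mean, ← smul_sub, ← sum_sub_distrib, norm_smul, norm_inv, Real.norm_natCast,
      mul_inv_cancel_left₀ (by positivity)]
    exact norm_sum_le _ _

theorem norm_mean_le {C : ℝ} (hC : 0 ≤ C) (S : Finset ι) (x : ι → E)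
    (hx : ∀ i ∈ S, ‖x i‖ ≤ C) : ‖mean S x‖ ≤ C := by
  rcases S.eq_empty_or_nonempty with rfl | hS
  · simpa [mean] using hC
  · have hsum : ‖∑ i ∈ S, x i‖ ≤ S.card * C := by
      simpa using norm_sum_le_of_le S hx
    rw [mean, norm_smul, norm_inv, Real.norm_natCast, inv_mul_le_iff₀ (by positivity)]
    exact hsum

end InnerProductSpace

section Clip

variable {d : ℕ} {C : ℝ}

theorem clip_of_norm_le {x : EuclideanSpace ℝ (Fin d)} (h : ‖x‖ ≤ C) : clip C x = x := by
  rcases eq_or_ne x 0 with rfl | hx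
  · simp [clip]
  · rw [clip, min_eq_left ((one_le_div₀ (norm_pos_iff.2 hx)).2 h), one_smul]

theorem clip_of_lt_norm {x : EuclideanSpace ℝ (Fin d)} (h : C < ‖x‖) :
    clip C x = (C / ‖x‖) • x := by
  rw [clip, min_eq_right (div_le_one_of_le₀ h.le (norm_nonneg x))]

theorem norm_clip_le (hC : 0 ≤ C) (x : EuclideanSpace ℝ (Fin d)) : ‖clip C x‖ ≤ C := by
  rcases le_or_gt ‖x‖ C with h | h
  · rwa [clip_of_norm_le h]
  · rw [clip_of_lt_norm h, norm_smul, Real.norm_of_nonneg (by positivity),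
      div_mul_cancel₀ _ (hC.trans_lt h).ne']

theorem inner_sub_clip_clip_sub_nonneg (hC : 0 ≤ C) (x : EuclideanSpace ℝ (Fin d))
    {v : EuclideanSpace ℝ (Fin d)} (hv : ‖v‖ ≤ C) :
    0 ≤ inner ℝ (x - clip C x) (clip C x - v) := by
  rcases le_or_gt ‖x‖ C with h | h
  · simp [clip_of_norm_le h]
  · have hx : 0 < ‖x‖ := hC.trans_lt h
    have hsub : x - (C / ‖x‖) • x = (1 - C / ‖x‖) • x := by rw [sub_smul, one_smul]
    have hxv : inner ℝ x v ≤ ‖x‖ * C :=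
      (real_inner_le_norm x v).trans (mul_le_mul_of_nonneg_left hv hx.le)
    rw [clip_of_lt_norm h, hsub, real_inner_smul_left, inner_sub_right, real_inner_smul_right,
      real_inner_self_eq_norm_sq]
    refine mul_nonneg (sub_nonneg.2 ((div_le_one hx).2 h.le)) ?_
    rw [div_mul_eq_mul_div, sq, ← mul_assoc, mul_div_cancel_right₀ _ hx.ne']
    linarith

theorem norm_clip_sub_sq_add_norm_sub_clip_sq_le (hC : 0 ≤ C) (x : EuclideanSpace ℝ (Fin d))
    {v : EuclideanSpace ℝ (Fin d)} (hv : ‖v‖ ≤ C) :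
    ‖clip C x - v‖ ^ 2 + ‖x - clip C x‖ ^ 2 ≤ ‖x - v‖ ^ 2 := by
  have h := inner_sub_clip_clip_sub_nonneg hC x hv
  rw [show x - v = (x - clip C x) + (clip C x - v) by abel, norm_add_sq_real]
  linarith

variable {ι : Type*} (S : Finset ι) (x : ι → EuclideanSpace ℝ (Fin d))

theorem scatter_clip_add_le (hC : 0 ≤ C) :
    scatter S (fun i => clip C (x i)) + ∑ i ∈ S, ‖x i - clip C (x i)‖ ^ 2
      ≤ scatter S x + S.card * ‖mean S x - mean S (fun i => clip C (x i))‖ ^ 2 := by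
  have hmean := norm_mean_le hC S _ fun i _ => norm_clip_le hC (x i)
  rw [← sum_norm_sub_sq_eq, ← sum_add_distrib]
  exact sum_le_sum fun i _ => norm_clip_sub_sq_add_norm_sub_clip_sq_le hC (x i) hmean

theorem sq_card_mul_norm_mean_sub_mean_clip_le :
    (S.card * ‖mean S x - mean S (fun i => clip C (x i))‖) ^ 2
      ≤ (S.filter (fun i => ‖x i‖ > C)).card * ∑ i ∈ S, ‖x i - clip C (x i)‖ ^ 2 := by
  have hsupp : ∀ i ∈ S, ‖x i - clip C (x i)‖ ≠ 0 → ‖x i‖ > C := fun i _ h => by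
    contrapose! h
    rw [clip_of_norm_le h, sub_self, norm_zero]
  calc _ ≤ (∑ i ∈ S, ‖x i - clip C (x i)‖) ^ 2 := by
        gcongr; exact card_mul_norm_mean_sub_mean_le S _ _
    _ = (∑ i ∈ S.filter (fun i => ‖x i‖ > C), ‖x i - clip C (x i)‖) ^ 2 := by
        rw [sum_filter_of_ne hsupp]
    _ ≤ (S.filter (fun i => ‖x i‖ > C)).card
          * ∑ i ∈ S.filter (fun i => ‖x i‖ > C), ‖x i - clip C (x i)‖ ^ 2 :=
        sq_sum_le_card_mul_sum_sq
    _ ≤ _ := mul_le_mul_of_nonneg_left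
        (sum_le_sum_of_subset_of_nonneg (filter_subset _ S) fun i _ _ => sq_nonneg _)
        (Nat.cast_nonneg _)

theorem scatter_clip_le (hC : 0 ≤ C) : scatter S (fun i => clip C (x i)) ≤ scatter S x := by
  have hsum := scatter_clip_add_le S x hC
  have hcs := sq_card_mul_norm_mean_sub_mean_clip_le (C := C) S x
  have hp : ((S.filter (fun i => ‖x i‖ > C)).card : ℝ) ≤ S.card := by
    exact_mod_cast card_filter_le _ _
  have hK : 0 ≤ ∑ i ∈ S, ‖x i - clip C (x i)‖ ^ 2 := sum_nonneg fun i _ => sq_nonneg _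
  rcases (Nat.cast_nonneg S.card : (0 : ℝ) ≤ S.card).eq_or_lt with hs | hs
  · rw [← hs] at hsum
    linarith
  · nlinarith

theorem card_mul_card_mul_norm_mean_sub_mean_clip_sq_le (hC : 0 ≤ C) :
    S.card * (S.filter (fun i => ¬ ‖x i‖ > C)).card
        * ‖mean S x - mean S (fun i => clip C (x i))‖ ^ 2
      ≤ (S.filter (fun i => ‖x i‖ > C)).card
        * (scatter S x - scatter S (fun i => clip C (x i))) := by
  have hsum := scatter_clip_add_le S x hC
  have hcs := sq_card_mul_norm_mean_sub_mean_clip_le (C := C) S x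
  have hcard : (S.card : ℝ) = (S.filter (fun i => ‖x i‖ > C)).card
      + (S.filter (fun i => ¬ ‖x i‖ > C)).card := by
    exact_mod_cast (card_filter_add_card_filter_not (s := S) (fun i => ‖x i‖ > C)).symm
  rw [hcard] at hsum hcs ⊢
  nlinarith [mul_le_mul_of_nonneg_left hsum
    (Nat.cast_nonneg (α := ℝ) (S.filter (fun i => ‖x i‖ > C)).card)]

end Clip

theorem robustness_under_clipping_with_unclipped {d n f : ℕ} (κ : ℝ)
    (F : (Fin n → EuclideanSpace ℝ (Fin d)) → EuclideanSpace ℝ (Fin d))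
    (hF : Robust n f κ F) (C : ℝ) (hC : 0 ≤ C)
    (x : Fin n → EuclideanSpace ℝ (Fin d))
    (S : Finset (Fin n)) (hS : S.card = n - f)
    (hunclipped : 1 ≤ (S.filter (fun i => ¬ ‖x i‖ > C)).card) :
    ‖F (fun i => clip C (x i)) - (S.card : ℝ)⁻¹ • ∑ i ∈ S, x i‖ ^ 2
      ≤ (κ + ((S.filter (fun i => ‖x i‖ > C)).card : ℝ)
              / ((S.filter (fun i => ¬ ‖x i‖ > C)).card : ℝ))
          / (S.card : ℝ) * ∑ i ∈ S, ‖x i - (S.card : ℝ)⁻¹ • ∑ j ∈ S, x j‖ ^ 2 := by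
  set y := fun i => clip C (x i)
  have hq : (0 : ℝ) < (S.filter (fun i => ¬ ‖x i‖ > C)).card := by exact_mod_cast hunclipped
  have hs : (0 : ℝ) < S.card := hq.trans_le (by exact_mod_cast card_filter_le _ _)
  have hx : 0 ≤ κ / S.card * scatter S x := (sq_nonneg _).trans (hF x S hS)
  have hb : ‖mean S x - mean S y‖ ^ 2
      ≤ (S.filter (fun i => ‖x i‖ > C)).card / (S.filter (fun i => ¬ ‖x i‖ > C)).card
          / S.card * (scatter S x - scatter S y) := by
    rw [div_div, div_mul_eq_mul_div, le_div_iff₀ (by positivity)]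
    linarith [card_mul_card_mul_norm_mean_sub_mean_clip_sq_le S x hC]
  calc ‖F y - mean S x‖ ^ 2 ≤ (‖F y - mean S y‖ + ‖mean S x - mean S y‖) ^ 2 := by
        rw [norm_sub_rev (mean S x)]
        gcongr
        exact norm_sub_le_norm_sub_add_norm_sub _ _ _
    _ ≤ (κ / S.card + (S.filter (fun i => ‖x i‖ > C)).card
          / (S.filter (fun i => ¬ ‖x i‖ > C)).card / S.card)
          * (scatter S y + (scatter S x - scatter S y)) :=
        sq_add_le_mul_add_mul (by positivity) (sum_nonneg fun i _ => sq_nonneg _)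
          (sub_nonneg.2 (scatter_clip_le S x hC)) (by rwa [add_sub_cancel]) (hF y S hS) hb
    _ = _ := by ring
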